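/- arXiv:2106.01324 — 4 statements merged into one kernel-verified Lean document; each statement's English description precedes it below -/
import Mathlib

section
/- If P is a positive integer such that T^k(P) = 1 for some natural number k, then A_n(P) \to 0 as n \to \infty, the limit inferior of the sequence (B_n(P))_n equals 1, and its limit superior equals 2. -/
open Filter

/-- The (accelerated) Collatz map `T(P) = P/2` if `P` even, `(3P+1)/2` if `P` odd. -/
def collatz (p : ℕ) : ℕ := if p % 2 = 0 then p / 2 else (3 * p + 1) / 2

/-- `collatzOddCount P n = m_n(P)`, the number of `k < n` with `T^k(P)` odd. -/
def collatzOddCount (P n : ℕ) : ℕ :=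
  ((Finset.range n).filter fun k => collatz^[k] P % 2 = 1).card

/-- The principal coefficient `A_n(P) = 3^{m_n(P)} / 2^n`. -/
noncomputable def collatzA (P n : ℕ) : ℝ := 3 ^ collatzOddCount P n / 2 ^ n

/-- The adjustment coefficient `B_n(P) = T^n(P) - A_n(P) * P`. -/
noncomputable def collatzB (P n : ℕ) : ℝ := (collatz^[n] P : ℝ) - collatzA P n * P

lemma collatz_one : collatz 1 = 2 := by decide
lemma collatz_two : collatz 2 = 1 := by decide

lemma orbit (P k : ℕ) (hk : collatz^[k] P = 1) (m : ℕ) :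
    collatz^[k + m] P = if m % 2 = 0 then 1 else 2 := by
  induction m with
  | zero => simpa using hk
  | succ m ih =>
    have : k + (m + 1) = (k + m) + 1 := by omega
    rw [this, Function.iterate_succ_apply', ih]
    rcases Nat.even_or_odd m with h | h
    · have h0 : m % 2 = 0 := Nat.even_iff.mp h
      have h1 : (m + 1) % 2 = 1 := by omega
      simp [h0, h1, collatz_one]
    · have h0 : m % 2 = 1 := Nat.odd_iff.mp h
      have h1 : (m + 1) % 2 = 0 := by omega
      simp [h0, h1, collatz_two]

lemma count_succ (P n : ℕ) :
    collatzOddCount P (n + 1) =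
      collatzOddCount P n + (if collatz^[n] P % 2 = 1 then 1 else 0) := by
  unfold collatzOddCount
  rw [Finset.range_add_one, Finset.filter_insert]
  split
  · rw [Finset.card_insert_of_notMem (by simp)]
  · simp

lemma count_step2 (P k : ℕ) (hk : collatz^[k] P = 1) (n : ℕ) (hn : k ≤ n) :
    collatzOddCount P (n + 2) = collatzOddCount P n + 1 := by
  obtain ⟨m, rfl⟩ := Nat.exists_eq_add_of_le hn
  have h1 := orbit P k hk m
  have h2 := orbit P k hk (m + 1)
  have e : k + m + 1 = k + (m + 1) := by omega
  rw [show k + m + 2 = (k + m + 1) + 1 by omega, count_succ, count_succ, e, h1, h2]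
  rcases Nat.even_or_odd m with h | h
  · have h0 : m % 2 = 0 := Nat.even_iff.mp h
    have h1' : (m + 1) % 2 = 1 := by omega
    simp [h0, h1']
  · have h0 : m % 2 = 1 := Nat.odd_iff.mp h
    have h1' : (m + 1) % 2 = 0 := by omega
    simp [h0, h1']

lemma A_step2 (P k : ℕ) (hk : collatz^[k] P = 1) (n : ℕ) (hn : k ≤ n) :
    collatzA P (n + 2) = 3 / 4 * collatzA P n := by
  unfold collatzA
  rw [count_step2 P k hk n hn, pow_succ, pow_add]
  ring

lemma A_formula (P k : ℕ) (hk : collatz^[k] P = 1) (n : ℕ) (hn : k ≤ n) (j : ℕ) :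
    collatzA P (n + 2 * j) = (3 / 4 : ℝ) ^ j * collatzA P n := by
  induction j with
  | zero => simp
  | succ j ih =>
    have : n + 2 * (j + 1) = (n + 2 * j) + 2 := by omega
    rw [this, A_step2 P k hk _ (by omega), ih, pow_succ]
    ring

lemma A_nonneg (P n : ℕ) : 0 ≤ collatzA P n := by
  unfold collatzA; positivity

lemma A_tendsto (P k : ℕ) (hk : collatz^[k] P = 1) :
    Tendsto (fun n => collatzA P n) atTop (nhds 0) := by
  set D : ℝ := max (collatzA P k) (collatzA P (k + 1)) with hD
  have hupper : ∀ n, k ≤ n → collatzA P n ≤ D * (3 / 4 : ℝ) ^ ((n - k) / 2) := by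
    intro n hn
    set m := n - k with hm
    set j := m / 2 with hj
    rcases Nat.even_or_odd m with h | h
    · have h0 : m % 2 = 0 := Nat.even_iff.mp h
      have : n = k + 2 * j := by omega
      rw [this, A_formula P k hk k le_rfl j]
      have : collatzA P k ≤ D := le_max_left _ _
      nlinarith [pow_nonneg (by norm_num : (0:ℝ) ≤ 3/4) j, A_nonneg P k]
    · have h0 : m % 2 = 1 := Nat.odd_iff.mp h
      have : n = (k + 1) + 2 * j := by omega
      rw [this, A_formula P k hk (k + 1) (by omega) j]
      have : collatzA P (k + 1) ≤ D := le_max_right _ _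
      nlinarith [pow_nonneg (by norm_num : (0:ℝ) ≤ 3/4) j, A_nonneg P (k + 1)]
  have hbound : Tendsto (fun n => D * (3 / 4 : ℝ) ^ ((n - k) / 2)) atTop (nhds 0) := by
    have h1 : Tendsto (fun j : ℕ => (3 / 4 : ℝ) ^ j) atTop (nhds 0) :=
      tendsto_pow_atTop_nhds_zero_of_lt_one (by norm_num) (by norm_num)
    have h2 : Tendsto (fun n : ℕ => (n - k) / 2) atTop atTop :=
      tendsto_atTop_atTop.mpr fun b => ⟨k + 2 * b, fun n hn => by omega⟩
    have := (h1.comp h2).const_mul D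
    simpa using this
  refine squeeze_zero' (Eventually.of_forall fun n => A_nonneg P n) ?_ hbound
  filter_upwards [eventually_ge_atTop k] with n hn using hupper n hn

theorem stmt_4 (P : ℕ) (hP : 0 < P) (k : ℕ) (hk : collatz^[k] P = 1) :
    Tendsto (fun n => collatzA P n) atTop (nhds 0) ∧
    Filter.liminf (fun n => collatzB P n) atTop = 1 ∧
    Filter.limsup (fun n => collatzB P n) atTop = 2 := by
  have hA := A_tendsto P k hk
  have hAP : Tendsto (fun n => collatzA P n * P) atTop (nhds 0) := by
    simpa using hA.mul_const (P : ℝ)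
  have hAPnn : ∀ n, 0 ≤ collatzA P n * P := fun n =>
    mul_nonneg (A_nonneg P n) (Nat.cast_nonneg P)
  -- value bounds
  have hv : ∀ n, k ≤ n → (1 : ℝ) ≤ (collatz^[n] P : ℝ) ∧ (collatz^[n] P : ℝ) ≤ 2 := by
    intro n hn
    obtain ⟨m, rfl⟩ := Nat.exists_eq_add_of_le hn
    rw [orbit P k hk m]
    split <;> norm_num
  have hBle2 : ∀ᶠ n in atTop, collatzB P n ≤ 2 := by
    filter_upwards [eventually_ge_atTop k] with n hn
    have := (hv n hn).2
    unfold collatzB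
    nlinarith [hAPnn n]
  have hBge : ∀ ε : ℝ, 0 < ε → ∀ᶠ n in atTop, 1 - ε ≤ collatzB P n := by
    intro ε hε
    have hsm : ∀ᶠ n in atTop, collatzA P n * P ≤ ε := by
      filter_upwards [hAP.eventually (gt_mem_nhds hε)] with n hn using hn.le
    filter_upwards [eventually_ge_atTop k, hsm] with n hn hs
    have := (hv n hn).1
    unfold collatzB
    linarith
  have hBge0 : ∀ᶠ n in atTop, (0 : ℝ) ≤ collatzB P n := by
    filter_upwards [hBge 1 one_pos] with n hn using by linarith
  have hbddle : IsBoundedUnder (· ≤ ·) atTop (fun n => collatzB P n) :=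
    isBoundedUnder_of_eventually_le hBle2
  have hbddge : IsBoundedUnder (· ≥ ·) atTop (fun n => collatzB P n) :=
    isBoundedUnder_of_eventually_ge hBge0
  -- frequently B ≤ 1 (even positions)
  have hfreq1 : ∃ᶠ n in atTop, collatzB P n ≤ 1 := by
    rw [frequently_atTop]
    intro N
    refine ⟨k + 2 * N, by omega, ?_⟩
    unfold collatzB
    rw [orbit P k hk (2 * N)]
    simp only [Nat.mul_mod_right, if_pos rfl]
    have := hAPnn (k + 2 * N)
    push_cast
    linarith
  -- frequently B ≥ 2 - ε (odd positions)
  have hfreq2 : ∀ ε : ℝ, 0 < ε → ∃ᶠ n in atTop, 2 - ε ≤ collatzB P n := by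
    intro ε hε
    have hsm : ∀ᶠ n in atTop, collatzA P n * P ≤ ε := by
      filter_upwards [hAP.eventually (gt_mem_nhds hε)] with n hn using hn.le
    obtain ⟨N0, hN0⟩ := eventually_atTop.mp hsm
    rw [frequently_atTop]
    intro N
    refine ⟨k + 2 * (N + N0) + 1, by omega, ?_⟩
    have hs := hN0 (k + 2 * (N + N0) + 1) (by omega)
    unfold collatzB
    rw [show k + 2 * (N + N0) + 1 = k + (2 * (N + N0) + 1) by omega,
      orbit P k hk (2 * (N + N0) + 1)]
    have : (2 * (N + N0) + 1) % 2 = 1 := by omega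
    rw [if_neg (by omega)]
    rw [show k + (2 * (N + N0) + 1) = k + 2 * (N + N0) + 1 by omega] at *
    push_cast
    linarith
  refine ⟨hA, ?_, ?_⟩
  · refine le_antisymm (liminf_le_of_frequently_le hfreq1 hbddge) ?_
    refine le_of_forall_pos_le_add fun ε hε => ?_
    have h1 : 1 - ε ≤ liminf (fun n => collatzB P n) atTop :=
      le_liminf_of_le hbddle.isCoboundedUnder_ge (hBge ε hε)
    linarith
  · refine le_antisymm (limsup_le_of_le hbddge.isCoboundedUnder_le hBle2) ?_
    refine le_of_forall_pos_le_add fun ε hε => ?_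
    have h1 : 2 - ε ≤ limsup (fun n => collatzB P n) atTop :=
      le_limsup_of_frequently_le (hfreq2 ε hε) hbddle
    linarith
end

section
/- Let P be a positive integer, n \ge 1, and k \ge 0, and suppose the parity sequence of the first n\cdot k iterates of P is periodic with period n, i.e. T^j(P) and T^{j \bmod n}(P) have the same parity for every j < n k. Then A_{nk}(P) = A_n(P)^k and B_{nk}(P) = B_n(P) \cdot \sum_{i=0}^{k-1} A_n(P)^i. -/
open Filter

/-!
`T^n` acts on `P` as the affine map `x ↦ A_n(P) x + B_n(P)`, and these maps compose: the
coefficients of `T^(a+b)` at `P` are those of `T^b` at `T^a(P)` composed with those of `T^a`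
at `P`. The coefficients of a single step depend only on the parity of the current iterate, so
`A_n(P)` and `B_n(P)` depend only on the first `n` parities. Under the periodicity hypothesis,
each of the `k` blocks of length `n` therefore contributes the same affine map `x ↦ a x + b`, and
its `k`-fold composite is `x ↦ a^k x + b (1 + a + ⋯ + a^(k-1))`.
-/

lemma collatzOddCount_eq_count (P n : ℕ) :
    collatzOddCount P n = Nat.count (fun k => collatz^[k] P % 2 = 1) n :=
  (Nat.count_eq_card_filter_range _ n).symm

lemma collatz_iterate_add_apply (P a b : ℕ) :
    collatz^[a + b] P = collatz^[b] (collatz^[a] P) := by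
  rw [Nat.add_comm, Function.iterate_add_apply]

lemma collatzOddCount_add (P a b : ℕ) :
    collatzOddCount P (a + b) = collatzOddCount P a + collatzOddCount (collatz^[a] P) b := by
  simp only [collatzOddCount_eq_count, Nat.count_add, collatz_iterate_add_apply]

@[simp]
lemma collatzA_zero (P : ℕ) : collatzA P 0 = 1 := by
  simp [collatzA, collatzOddCount]

@[simp]
lemma collatzB_zero (P : ℕ) : collatzB P 0 = 0 := by
  simp [collatzB]

lemma collatzA_add (P a b : ℕ) :
    collatzA P (a + b) = collatzA P a * collatzA (collatz^[a] P) b := by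
  simp only [collatzA, collatzOddCount_add, pow_add]
  ring

lemma collatzB_add (P a b : ℕ) :
    collatzB P (a + b) =
      collatzA (collatz^[a] P) b * collatzB P a + collatzB (collatz^[a] P) b := by
  simp only [collatzB, collatzA_add, collatz_iterate_add_apply]
  ring

lemma collatzA_one (q : ℕ) : collatzA q 1 = if q % 2 = 1 then 3 / 2 else 1 / 2 := by
  have hcount : collatzOddCount q 1 = if q % 2 = 1 then 1 else 0 := by
    simp only [collatzOddCount_eq_count, Nat.count_one, Function.iterate_zero_apply]
    congr
  rw [collatzA, hcount]
  split_ifs <;> norm_num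

lemma collatzB_one (q : ℕ) : collatzB q 1 = if q % 2 = 1 then 1 / 2 else 0 := by
  obtain ⟨c, rfl | rfl⟩ := Nat.even_or_odd' q
  · have hT : collatz (2 * c) = c := by simp [collatz]
    simp [collatzB, collatzA_one, hT]
  · have hT : collatz (2 * c + 1) = 3 * c + 2 := by simp only [collatz, if_neg (by omega : (2 * c + 1) % 2 ≠ 0)]; omega
    simp only [collatzB, collatzA_one, Function.iterate_one, hT]
    norm_num
    ring

section ParityCongr

variable {P Q n : ℕ} (hpar : ∀ j < n, collatz^[j] P % 2 = collatz^[j] Q % 2)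
include hpar

lemma collatzA_congr_of_parity : collatzA P n = collatzA Q n := by
  have hcount : collatzOddCount P n = collatzOddCount Q n := by
    unfold collatzOddCount
    congr 1
    exact Finset.filter_congr fun j hj => by rw [hpar j (Finset.mem_range.mp hj)]
  rw [collatzA, collatzA, hcount]

lemma collatzB_congr_of_parity : collatzB P n = collatzB Q n := by
  induction n with
  | zero => simp
  | succ n ih =>
    rw [collatzB_add P n 1, collatzB_add Q n 1, ih fun j hj => hpar j (by omega),
      collatzA_one, collatzA_one, collatzB_one, collatzB_one, hpar n n.lt_succ_self]

end ParityCongr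

lemma collatzA_mul_of_blocks {P n k : ℕ}
    (hA : ∀ i < k, collatzA (collatz^[n * i] P) n = collatzA P n) :
    collatzA P (n * k) = collatzA P n ^ k := by
  induction k with
  | zero => simp
  | succ k ih =>
    rw [Nat.mul_succ, collatzA_add, hA k k.lt_succ_self, ih fun i hi => hA i (by omega), pow_succ]

lemma collatzB_mul_of_blocks {P n k : ℕ}
    (hA : ∀ i < k, collatzA (collatz^[n * i] P) n = collatzA P n)
    (hB : ∀ i < k, collatzB (collatz^[n * i] P) n = collatzB P n) :
    collatzB P (n * k) = collatzB P n * ∑ i ∈ Finset.range k, collatzA P n ^ i := by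
  induction k with
  | zero => simp
  | succ k ih =>
    rw [Nat.mul_succ, collatzB_add, hA k k.lt_succ_self, hB k k.lt_succ_self,
      ih (fun i hi => hA i (by omega)) (fun i hi => hB i (by omega)), geom_sum_succ]
    ring

lemma collatz_parity_of_periodic {P n k : ℕ}
    (hper : ∀ j < n * k, collatz^[j] P % 2 = collatz^[j % n] P % 2) {i : ℕ} (hi : i < k) :
    ∀ j < n, collatz^[j] (collatz^[n * i] P) % 2 = collatz^[j] P % 2 := by
  intro j hj
  have hlt : n * i + j < n * k := by nlinarith
  rw [← collatz_iterate_add_apply, hper _ hlt, Nat.mul_add_mod, Nat.mod_eq_of_lt hj]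

theorem stmt_8_general (P : ℕ) (n : ℕ) (k : ℕ)
    (hper : ∀ j < n * k, collatz^[j] P % 2 = collatz^[j % n] P % 2) :
    collatzA P (n * k) = collatzA P n ^ k ∧
    collatzB P (n * k) = collatzB P n * ∑ i ∈ Finset.range k, collatzA P n ^ i := by
  have hA : ∀ i < k, collatzA (collatz^[n * i] P) n = collatzA P n := fun i hi =>
    collatzA_congr_of_parity (collatz_parity_of_periodic hper hi)
  have hB : ∀ i < k, collatzB (collatz^[n * i] P) n = collatzB P n := fun i hi =>
    collatzB_congr_of_parity (collatz_parity_of_periodic hper hi)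
  exact ⟨collatzA_mul_of_blocks hA, collatzB_mul_of_blocks hA hB⟩

theorem stmt_8 (P : ℕ) (hP : 0 < P) (n : ℕ) (hn : 1 ≤ n) (k : ℕ)
    (hper : ∀ j < n * k, collatz^[j] P % 2 = collatz^[j % n] P % 2) :
    collatzA P (n * k) = collatzA P n ^ k ∧
    collatzB P (n * k) = collatzB P n * ∑ i ∈ Finset.range k, collatzA P n ^ i :=
  stmt_8_general P n k hper
end

section
/- Let P be a positive integer and n \ge 1. If T^k(P) is odd for every k with 0 \le k < n, then 2^n divides P + 1 and T^n(P) = 3^n \cdot (P+1) / 2^n - 1. -/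
open Filter

/-! On odd inputs `T` multiplies `p + 1` by `3/2`, so `n` odd steps multiply `P + 1` by
`3^n / 2^n`; as `3^n` is coprime to `2^n`, the factor `2^n` must already divide `P + 1`. -/

theorem two_mul_collatz_add_one_of_odd {p : ℕ} (hp : p % 2 = 1) :
    2 * (collatz p + 1) = 3 * (p + 1) := by
  simp only [collatz, hp, one_ne_zero, if_false]
  omega

theorem two_pow_mul_iterate_collatz_add_one {P n : ℕ} (hodd : ∀ k < n, collatz^[k] P % 2 = 1) :
    2 ^ n * (collatz^[n] P + 1) = 3 ^ n * (P + 1) := by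
  induction n with
  | zero => simp
  | succ n ih =>
    calc 2 ^ (n + 1) * (collatz^[n + 1] P + 1)
        = 2 ^ n * (2 * (collatz (collatz^[n] P) + 1)) := by
          rw [Function.iterate_succ_apply', pow_succ, mul_assoc]
      _ = 3 * (2 ^ n * (collatz^[n] P + 1)) := by
          rw [two_mul_collatz_add_one_of_odd (hodd n n.lt_succ_self)]; ring
      _ = 3 ^ (n + 1) * (P + 1) := by
          rw [ih fun k hk => hodd k (Nat.lt_succ_of_lt hk)]; ring

theorem stmt_14_general (P : ℕ) (n : ℕ)
    (hodd : ∀ k < n, collatz^[k] P % 2 = 1) :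
    2 ^ n ∣ P + 1 ∧ collatz^[n] P = 3 ^ n * (P + 1) / 2 ^ n - 1 := by
  have key := two_pow_mul_iterate_collatz_add_one hodd
  have hdvd : 2 ^ n ∣ P + 1 :=
    (Nat.Coprime.pow n n (by norm_num : Nat.Coprime 2 3)).dvd_of_dvd_mul_left ⟨_, key.symm⟩
  refine ⟨hdvd, ?_⟩
  have hquot : 3 ^ n * (P + 1) / 2 ^ n = collatz^[n] P + 1 := by
    rw [← key, Nat.mul_div_cancel_left _ (by positivity)]
  omega

theorem stmt_14 (P : ℕ) (hP : 0 < P) (n : ℕ) (hn : 1 ≤ n)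
    (hodd : ∀ k < n, collatz^[k] P % 2 = 1) :
    2 ^ n ∣ P + 1 ∧ collatz^[n] P = 3 ^ n * (P + 1) / 2 ^ n - 1 :=
  stmt_14_general P n hodd
end

section
/- If P is a positive integer whose parity sequence is purely periodic with period n \ge 1, i.e. T^{k+n}(P) and T^k(P) have the same parity for every k \ge 0, then the orbit itself is periodic with period n: T^n(P) = P. Equivalently, there is no positive integer generating a \beta-periodic Collatz sequence (structurally periodic but not numerically periodic) of infinite length. -/
open Filter

/-!
Two numbers whose orbits have the same parities for `N` steps are congruent modulo `2^N`:
on such a stretch the orbits are driven by the same affine maps, so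
`2^N (T^N x - T^N y) = 3^m (x - y)`, and `3^m` is prime to `2^N`.
By periodicity of the parity sequence, `T^n(P)` and `P` have the same parity sequence,
so they are congruent modulo every power of `2`, hence equal.
-/

lemma collatzOddCount_succ (P n : ℕ) :
    collatzOddCount P (n + 1) =
      collatzOddCount P n + if collatz^[n] P % 2 = 1 then 1 else 0 := by
  unfold collatzOddCount
  rw [Finset.range_add_one, Finset.filter_insert]
  split_ifs <;> simp [Finset.card_insert_of_notMem]

lemma two_mul_collatz_sub_collatz {x y : ℕ} (h : x % 2 = y % 2) :
    2 * ((collatz x : ℤ) - collatz y) = 3 ^ (if x % 2 = 1 then 1 else 0) * ((x : ℤ) - y) := by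
  rcases Nat.mod_two_eq_zero_or_one x with hx | hx <;> simp only [collatz] <;> split_ifs <;>
    simp <;> omega

lemma two_pow_mul_iterate_collatz_sub {x y n : ℕ}
    (h : ∀ k < n, collatz^[k] x % 2 = collatz^[k] y % 2) :
    2 ^ n * ((collatz^[n] x : ℤ) - collatz^[n] y) = 3 ^ collatzOddCount x n * ((x : ℤ) - y) := by
  induction n with
  | zero => simp [collatzOddCount]
  | succ n ih =>
    rw [Function.iterate_succ_apply', Function.iterate_succ_apply', collatzOddCount_succ,
      pow_succ, mul_assoc, two_mul_collatz_sub_collatz (h n n.lt_add_one), pow_add,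
      mul_left_comm, ih fun k hk => h k (hk.trans n.lt_add_one)]
    ring

lemma two_pow_dvd_sub_of_iterate_collatz_mod_two {x y n : ℕ}
    (h : ∀ k < n, collatz^[k] x % 2 = collatz^[k] y % 2) :
    (2 : ℤ) ^ n ∣ (x : ℤ) - y := by
  have hcop : IsCoprime ((2 : ℤ) ^ n) (3 ^ collatzOddCount x n) :=
    (Int.isCoprime_iff_gcd_eq_one.mpr rfl).pow
  exact hcop.dvd_of_dvd_mul_left ⟨_, (two_pow_mul_iterate_collatz_sub h).symm⟩

lemma eq_of_iterate_collatz_mod_two_eq {x y : ℕ}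
    (h : ∀ k, collatz^[k] x % 2 = collatz^[k] y % 2) : x = y := by
  set d : ℤ := (x : ℤ) - y
  have hdvd : (2 : ℤ) ^ d.natAbs ∣ d := two_pow_dvd_sub_of_iterate_collatz_mod_two fun k _ => h k
  have hd : d = 0 := Int.eq_zero_of_dvd_of_natAbs_lt_natAbs hdvd <| by
    rw [Int.natAbs_pow]
    exact Nat.lt_two_pow_self
  omega

theorem stmt_17_general (P : ℕ) (n : ℕ)
    (hper : ∀ k : ℕ, collatz^[k + n] P % 2 = collatz^[k] P % 2) :
    collatz^[n] P = P :=
  eq_of_iterate_collatz_mod_two_eq fun k => by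
    rw [← Function.iterate_add_apply]
    exact hper k

theorem stmt_17 (P : ℕ) (hP : 0 < P) (n : ℕ) (hn : 1 ≤ n)
    (hper : ∀ k : ℕ, collatz^[k + n] P % 2 = collatz^[k] P % 2) :
    collatz^[n] P = P :=
  stmt_17_general P n hper
end
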